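/- For the continuous-time quantum walk on K_n started at vertex 0, the probability of remaining at vertex 0 at time t is P_t(0) = 1 - (4(n-1)/n²) sin²(tn/(2(n-1))). -/

import Mathlib

open Matrix Complex

lemma exp_idem_aux {n : ℕ} (P : Matrix (Fin n) (Fin n) ℂ) (hP : P * P = P) (x y : ℂ) :
    NormedSpace.exp (x • P + y • (1 - P)) =
      Complex.exp x • P + Complex.exp y • (1 - P) := by
  letI : SeminormedRing (Matrix (Fin n) (Fin n) ℂ) := Matrix.linftyOpSemiNormedRing
  letI : NormedRing (Matrix (Fin n) (Fin n) ℂ) := Matrix.linftyOpNormedRing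
  letI : NormedAlgebra ℂ (Matrix (Fin n) (Fin n) ℂ) := Matrix.linftyOpNormedAlgebra
  have hQ : (1 - P) * (1 - P) = 1 - P := by
    simp [sub_mul, mul_sub, hP]
  have hPQ : P * (1 - P) = 0 := by simp [mul_sub, hP]
  have hQP : (1 - P) * P = 0 := by simp [sub_mul, hP]
  let φ : (ℂ × ℂ) →ₐ[ℂ] Matrix (Fin n) (Fin n) ℂ :=
  { toFun := fun p => p.1 • P + p.2 • (1 - P)
    map_one' := by simp
    map_mul' := fun p q => by
      simp only [Prod.fst_mul, Prod.snd_mul, add_mul, mul_add, smul_mul_smul_comm,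
        hP, hQ, hPQ, hQP, smul_zero, add_zero, zero_add]
    map_zero' := by simp
    map_add' := fun p q => by
      simp only [Prod.fst_add, Prod.snd_add, add_smul]; abel
    commutes' := fun c => by
      simp [Algebra.algebraMap_eq_smul_one, smul_sub, Prod.smul_def]
      }
  have hφ : Continuous φ := by
    show Continuous fun p : ℂ × ℂ => p.1 • P + p.2 • (1 - P)
    exact (continuous_fst.smul continuous_const).add (continuous_snd.smul continuous_const)
  have := NormedSpace.map_exp φ hφ (x, y)
  have hxy : φ (x, y) = x • P + y • (1 - P) := rfl
  rw [hxy] at this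
  refine this.symm.trans ?_
  have h1 : NormedSpace.exp ((x, y) : ℂ × ℂ) = (Complex.exp x, Complex.exp y) := by
    ext
    · rw [Prod.fst_exp]; exact (Complex.exp_eq_exp_ℂ ▸ rfl)
    · rw [Prod.snd_exp]; exact (Complex.exp_eq_exp_ℂ ▸ rfl)
  rw [h1]; rfl

/-- For the continuous-time quantum walk on `K_n` started at vertex `0`, the probability
of remaining at vertex `0` at time `t` is `P_t(0) = 1 - (4(n-1)/n²) sin²(tn/(2(n-1)))`. -/
theorem completeGraph_return_probability (n : ℕ) (hn : 2 ≤ n) (t : ℝ)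
    (H : Matrix (Fin n) (Fin n) ℂ)
    (hH : H = ((n : ℂ) - 1)⁻¹ • ((Matrix.of fun _ _ => (1 : ℂ)) - 1))
    (ψ : Fin n → ℂ)
    (hψ : ψ = (NormedSpace.exp ((-(t : ℂ) * Complex.I) • H)).mulVec
      (fun j => if j = ⟨0, by omega⟩ then 1 else 0)) :
    ‖ψ ⟨0, by omega⟩‖ ^ 2 =
      1 - 4 * ((n : ℝ) - 1) / (n : ℝ) ^ 2 * Real.sin (t * n / (2 * ((n : ℝ) - 1))) ^ 2 := by
  have hn0 : (n : ℂ) ≠ 0 := Nat.cast_ne_zero.mpr (by omega)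
  have hn1 : (n : ℂ) - 1 ≠ 0 := by
    intro h
    have h1 : (n : ℂ) = 1 := by linear_combination h
    have h2 : n = 1 := by exact_mod_cast h1
    omega
  have hnR0 : (n : ℝ) ≠ 0 := Nat.cast_ne_zero.mpr (by omega)
  have hnR1 : (n : ℝ) - 1 ≠ 0 := by
    have : (1:ℝ) < (n:ℝ) := by exact_mod_cast hn
    linarith
  obtain ⟨J, hJdef⟩ : ∃ J' : Matrix (Fin n) (Fin n) ℂ, J' = Matrix.of fun _ _ => (1:ℂ) :=
    ⟨_, rfl⟩
  obtain ⟨P, hPdef⟩ : ∃ P' : Matrix (Fin n) (Fin n) ℂ, P' = (n : ℂ)⁻¹ • J := ⟨_, rfl⟩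
  rw [← hJdef] at hH
  have hJ2 : J * J = (n : ℂ) • J := by
    rw [hJdef]
    ext i j
    simp [Matrix.mul_apply]
  have hP : P * P = P := by
    rw [hPdef, smul_mul_smul_comm, hJ2, smul_smul]
    congr 1
    field_simp
  have hJP : J = (n : ℂ) • P := by
    rw [hPdef, smul_smul, mul_inv_cancel₀ hn0, one_smul]
  set x : ℂ := -(t : ℂ) * Complex.I with hxdef
  set y : ℂ := (t : ℂ) * Complex.I * ((n : ℂ) - 1)⁻¹ with hydef
  have key : (-(t : ℂ) * Complex.I) • H = x • P + y • (1 - P) := by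
    rw [hH, hJP, hxdef, hydef]
    match_scalars
    · field_simp
      ring
    · field_simp
  have hexp : NormedSpace.exp ((-(t : ℂ) * Complex.I) • H)
      = Complex.exp x • P + Complex.exp y • (1 - P) := by
    rw [key]; exact exp_idem_aux P hP x y
  set c1 : ℝ := ((n : ℝ))⁻¹ with hc1def
  set s : ℝ := t / ((n : ℝ) - 1) with hsdef
  have hx' : x = ((-t : ℝ) : ℂ) * Complex.I := by rw [hxdef]; push_cast; ring
  have hy' : y = ((s : ℝ) : ℂ) * Complex.I := by
    rw [hydef, hsdef]; push_cast; field_simp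
  have hP00 : P ⟨0, by omega⟩ ⟨0, by omega⟩ = ((c1 : ℝ) : ℂ) := by
    rw [hPdef, hJdef]
    simp [hc1def]
  have h0 : ψ ⟨0, by omega⟩ = ((c1 : ℝ) : ℂ) * Complex.exp (((-t : ℝ) : ℂ) * Complex.I)
      + ((1 - c1 : ℝ) : ℂ) * Complex.exp (((s : ℝ) : ℂ) * Complex.I) := by
    rw [hψ, hexp, hx', hy']
    rw [Matrix.mulVec]
    simp only [dotProduct, mul_ite, mul_one, mul_zero,
      Finset.sum_ite_eq', Finset.mem_univ, if_true]
    rw [Matrix.add_apply, Matrix.smul_apply, Matrix.smul_apply, Matrix.sub_apply,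
      Matrix.one_apply_eq, hP00, smul_eq_mul, smul_eq_mul]
    push_cast
    ring
  rw [h0, Complex.sq_norm, Complex.normSq_apply]
  simp only [Complex.add_re, Complex.add_im, Complex.mul_re, Complex.mul_im,
    Complex.ofReal_re, Complex.ofReal_im, Complex.exp_ofReal_mul_I_re,
    Complex.exp_ofReal_mul_I_im, zero_mul, sub_zero, zero_add, mul_zero, add_zero]
  set θ : ℝ := t * n / (2 * ((n : ℝ) - 1)) with hθdef
  have key2 : Real.cos (-t) * Real.cos s + Real.sin (-t) * Real.sin s
      = 1 - 2 * Real.sin θ ^ 2 := by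
    rw [← Real.cos_sub, show -t - s = -(2 * θ) by rw [hθdef, hsdef]; field_simp; ring,
      Real.cos_neg, Real.cos_two_mul]
    have := Real.sin_sq_add_cos_sq θ
    nlinarith
  have hr : 4 * ((n : ℝ) - 1) / (n : ℝ) ^ 2 = 4 * c1 * (1 - c1) := by
    rw [hc1def]; field_simp
  rw [hr]
  have pt := Real.sin_sq_add_cos_sq (-t)
  have ps := Real.sin_sq_add_cos_sq s
  linear_combination (c1^2) * pt + ((1-c1)^2) * ps + (2*c1*(1-c1)) * key2
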